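/- Fix reals b, σ with σ ≠ 0, d > 0 and T ≥ 2d, and assume 1 − d·(b/σ)² > 0. Then the first-slice integral system with τ = d, i.e. posed on the full slice [T−2d, T−d] × [−d, 0]², admits a unique continuous solution ξ = (ξ₁, ξ₂, ξ₃), and this solution satisfies 0 < 1 − d·(b/σ)² ≤ ξ₁(t) ≤ 1 for every t ∈ [T−2d, T−d]. -/

import Mathlib

/-!
The system is solved explicitly by `ξ₁ t = (1 + (b/σ)² (T - d - t))⁻¹`, `ξ₂ = b ξ₁`,
`ξ₃ = b² ξ₁` (constant in `s` and `r`): `ξ₁` solves the Riccati equation `ξ₁' = (b/σ)² ξ₁²`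
with `ξ₁ (T - d) = 1`, which is what (i)–(iii) say for such a triple, and `(1 + x)⁻¹ ≥ 1 - x`
gives the lower bound.

Uniqueness is a Picard iteration. Two continuous solutions are bounded, say by `A`. If their
three components differ by at most `ρₙ t`, `(|b| + 1) ρₙ t` and `(|b| + 1)² ρₙ t`, with
`ρₙ t = B (K (T - d - t))ⁿ / n!` and `K = 2 A (|b| + 1)² / σ²`, then subtracting the integral
equations gives the same bounds with `ρₙ₊₁`; the weights `|b| + 1` absorb the factor `b` with
which `ξ₁` and `ξ₂` re-enter (ii) and (iii) outside the integral. Since `ρₙ → 0`, the solutions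
agree.
-/

open Set MeasureTheory

/-- The first-slice integral system on the full slice `[T-2d, T-d] × [-d,0]²`. -/
def isSolutionSlice (b σ T d : ℝ) (ξ₁ : ℝ → ℝ) (ξ₂ : ℝ → ℝ → ℝ) (ξ₃ : ℝ → ℝ → ℝ → ℝ) : Prop :=
  ∀ t ∈ Icc (T - 2 * d) (T - d), ∀ s ∈ Icc (-d) 0, ∀ r ∈ Icc (-d) 0,
    ξ₁ t = 1 - (σ ^ 2)⁻¹ * ∫ x in t..(T - d), (ξ₂ x 0) ^ 2 ∧
    ξ₂ t s = b * ξ₁ (min (T - d) (t + s + d)) -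
      (σ ^ 2)⁻¹ * ∫ x in t..(min (T - d) (t + s + d)), ξ₂ x 0 * ξ₃ x (t + s - x) 0 ∧
    ξ₃ t s r = b * ξ₂ (min (T - d) (t + min s r + d)) (|s - r| - d) -
      (σ ^ 2)⁻¹ * ∫ x in t..(min (T - d) (t + min s r + d)),
        ξ₃ x (t + s - x) 0 * ξ₃ x 0 (t + r - x)

/-- Continuity of a triple on the full slice `[T-2d, T-d] × [-d,0]²`. -/
def isContTriple (T d : ℝ) (ξ₁ : ℝ → ℝ) (ξ₂ : ℝ → ℝ → ℝ) (ξ₃ : ℝ → ℝ → ℝ → ℝ) : Prop :=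
  ContinuousOn ξ₁ (Icc (T - 2 * d) (T - d)) ∧
  ContinuousOn (fun p : ℝ × ℝ => ξ₂ p.1 p.2) (Icc (T - 2 * d) (T - d) ×ˢ Icc (-d) 0) ∧
  ContinuousOn (fun p : ℝ × ℝ × ℝ => ξ₃ p.1 p.2.1 p.2.2)
    (Icc (T - 2 * d) (T - d) ×ˢ Icc (-d) 0 ×ˢ Icc (-d) 0)

open scoped Nat

lemma abs_mul_sub_mul_le {p q p' q' A ε : ℝ} (hp : |p| ≤ A) (hq' : |q'| ≤ A)
    (h : |p - q| ≤ ε) (h' : |p' - q'| ≤ ε) : |p * p' - q * q'| ≤ 2 * A * ε := by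
  have hA : 0 ≤ A := (abs_nonneg p).trans hp
  have hε : 0 ≤ ε := (abs_nonneg _).trans h
  calc |p * p' - q * q'| = |p * (p' - q') + (p - q) * q'| := by ring_nf
    _ ≤ |p| * |p' - q'| + |p - q| * |q'| := by
      rw [← abs_mul, ← abs_mul]; exact abs_add_le _ _
    _ ≤ A * ε + ε * A := by gcongr
    _ = 2 * A * ε := by ring

lemma abs_mul_sub_le {a x y X Y : ℝ} (hx : |x| ≤ X) (hy : |y| ≤ Y) :
    |a * x - y| ≤ |a| * X + Y :=
  (abs_sub _ _).trans (by rw [abs_mul]; gcongr)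

lemma abs_integral_le_mul_pow_succ_div {f : ℝ → ℝ} {t m c K : ℝ} (n : ℕ) (htm : t ≤ m)
    (hmc : m ≤ c) (hK : 0 ≤ K) (hf : ContinuousOn f (Icc t m))
    (hfK : ∀ x ∈ Icc t m, |f x| ≤ K * (c - x) ^ n) :
    |∫ x in t..m, f x| ≤ K * (c - t) ^ (n + 1) / (n + 1) := by
  have hint : IntervalIntegrable f volume t m := hf.intervalIntegrable_of_Icc htm
  calc |∫ x in t..m, f x| ≤ ∫ x in t..m, |f x| :=
        intervalIntegral.abs_integral_le_integral_abs htm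
    _ ≤ ∫ x in t..m, K * (c - x) ^ n :=
        intervalIntegral.integral_mono_on htm hint.abs
          ((continuous_const.mul ((continuous_sub_left c).pow n)).intervalIntegrable t m) hfK
    _ = K * (((c - t) ^ (n + 1) - (c - m) ^ (n + 1)) / (n + 1)) := by
        rw [intervalIntegral.integral_const_mul, intervalIntegral.integral_comp_sub_left
          (fun x => x ^ n), integral_pow]
    _ ≤ K * (c - t) ^ (n + 1) / (n + 1) := by
        rw [mul_div_assoc]
        gcongr
        exact sub_le_self _ (pow_nonneg (sub_nonneg.2 hmc) _)

noncomputable def picardBound (B K c : ℝ) (n : ℕ) (t : ℝ) : ℝ := B * K ^ n * (c - t) ^ n / n !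

section picardBound

variable {B K c : ℝ}

lemma picardBound_nonneg (hB : 0 ≤ B) (hK : 0 ≤ K) {t : ℝ} (ht : t ≤ c) (n : ℕ) :
    0 ≤ picardBound B K c n t := by
  unfold picardBound
  have : 0 ≤ c - t := sub_nonneg.2 ht
  positivity

lemma picardBound_antitoneOn (hB : 0 ≤ B) (hK : 0 ≤ K) {t m : ℝ} (htm : t ≤ m) (hmc : m ≤ c)
    (n : ℕ) : picardBound B K c n m ≤ picardBound B K c n t := by
  unfold picardBound
  have : 0 ≤ c - m := sub_nonneg.2 hmc
  gcongr

lemma abs_mul_integral_sub_le_picardBound_succ {f₁ f₂ : ℝ → ℝ} {a M t m : ℝ} (n : ℕ)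
    (ha : 0 ≤ a) (hM : 0 ≤ M) (hB : 0 ≤ B) (htm : t ≤ m) (hmc : m ≤ c)
    (hf₁ : ContinuousOn f₁ (Icc t m)) (hf₂ : ContinuousOn f₂ (Icc t m))
    (hbound : ∀ x ∈ Icc t m, |f₁ x - f₂ x| ≤ M * picardBound B (a * M) c n x) :
    |a * (∫ x in t..m, f₁ x) - a * ∫ x in t..m, f₂ x| ≤ picardBound B (a * M) c (n + 1) t := by
  rw [← mul_sub, ← intervalIntegral.integral_sub (hf₁.intervalIntegrable_of_Icc htm)
    (hf₂.intervalIntegrable_of_Icc htm), abs_mul, abs_of_nonneg ha]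
  have key := abs_integral_le_mul_pow_succ_div n htm hmc
    (by positivity : 0 ≤ B * (a * M) ^ n * M / n !) (hf₁.sub hf₂) fun x hx => by
      refine (hbound x hx).trans (le_of_eq ?_)
      unfold picardBound; ring
  calc a * |∫ x in t..m, f₁ x - f₂ x|
      ≤ a * (B * (a * M) ^ n * M / n ! * (c - t) ^ (n + 1) / (n + 1)) := by gcongr; exact key
    _ = picardBound B (a * M) c (n + 1) t := by
      unfold picardBound; rw [Nat.factorial_succ]; push_cast; field_simp; ring

lemma eq_zero_of_forall_abs_le_mul_picardBound {u t C : ℝ}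
    (h : ∀ n, |u| ≤ C * picardBound B K c n t) : u = 0 := by
  have hlim : Filter.Tendsto (fun n => C * picardBound B K c n t) Filter.atTop (nhds 0) := by
    simpa [picardBound, mul_div_assoc, mul_pow, mul_assoc] using
      (FloorSemiring.tendsto_pow_div_factorial_atTop (K * (c - t))).const_mul (C * B)
  exact abs_nonpos_iff.1 (ge_of_tendsto' hlim h)

end picardBound

noncomputable def riccatiXi (b σ c t : ℝ) : ℝ := (1 + (b / σ) ^ 2 * (c - t))⁻¹

section riccatiXi

variable {b σ c : ℝ}

lemma one_add_mul_sub_pos {t : ℝ} (ht : t ≤ c) : 0 < 1 + (b / σ) ^ 2 * (c - t) := by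
  have : 0 ≤ c - t := sub_nonneg.2 ht
  positivity

lemma hasDerivAt_riccatiXi {t : ℝ} (ht : t ≤ c) :
    HasDerivAt (riccatiXi b σ c) ((b / σ) ^ 2 * riccatiXi b σ c t ^ 2) t := by
  have hden : HasDerivAt (fun x => 1 + (b / σ) ^ 2 * (c - x)) (-(b / σ) ^ 2) t := by
    simpa using ((hasDerivAt_id t).const_sub c).const_mul ((b / σ) ^ 2) |>.const_add 1
  refine (hden.inv (one_add_mul_sub_pos ht).ne').congr_deriv ?_
  rw [riccatiXi, neg_neg, inv_pow, div_eq_mul_inv]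

lemma continuousOn_riccatiXi : ContinuousOn (riccatiXi b σ c) (Iic c) := fun _ hx =>
  (hasDerivAt_riccatiXi hx).continuousAt.continuousWithinAt

lemma riccatiXi_self : riccatiXi b σ c c = 1 := by simp [riccatiXi]

lemma riccatiXi_le_one {t : ℝ} (ht : t ≤ c) : riccatiXi b σ c t ≤ 1 := by
  have : 0 ≤ c - t := sub_nonneg.2 ht
  exact inv_le_one_of_one_le₀ (le_add_of_nonneg_right (by positivity))

lemma one_sub_le_riccatiXi {t : ℝ} (ht : t ≤ c) :
    1 - (c - t) * (b / σ) ^ 2 ≤ riccatiXi b σ c t := by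
  have hpos := one_add_mul_sub_pos (b := b) (σ := σ) ht
  rw [riccatiXi, ← one_div, le_div_iff₀ hpos]
  nlinarith [sq_nonneg ((b / σ) ^ 2 * (c - t))]

lemma inv_sq_mul_integral_sq_riccatiXi {t u : ℝ} (ht : t ≤ c) (hu : u ≤ c) :
    (σ ^ 2)⁻¹ * ∫ x in t..u, (b * riccatiXi b σ c x) ^ 2
      = riccatiXi b σ c u - riccatiXi b σ c t := by
  have hsub : uIcc t u ⊆ Iic c := fun x hx => hx.2.trans (max_le ht hu)
  rw [← intervalIntegral.integral_const_mul]
  refine intervalIntegral.integral_eq_sub_of_hasDerivAt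
    (fun x hx => (hasDerivAt_riccatiXi (hsub hx)).congr_deriv (by rw [div_pow]; ring)) ?_
  have hF : ContinuousOn (riccatiXi b σ c) (uIcc t u) := continuousOn_riccatiXi.mono hsub
  exact ContinuousOn.intervalIntegrable (by fun_prop)

end riccatiXi

section explicitSolution

variable {b σ d T : ℝ}

lemma isSolutionSlice_riccatiXi :
    isSolutionSlice b σ T d (riccatiXi b σ (T - d)) (fun t _ => b * riccatiXi b σ (T - d) t)
      (fun t _ _ => b ^ 2 * riccatiXi b σ (T - d) t) := by
  intro t ht s _ r _
  set F := riccatiXi b σ (T - d)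
  have key : ∀ u ≤ T - d, ∀ k : ℝ,
      (σ ^ 2)⁻¹ * ∫ x in t..u, k * (b * F x) ^ 2 = k * (F u - F t) := fun u hu k => by
    rw [intervalIntegral.integral_const_mul, mul_left_comm,
      inv_sq_mul_integral_sq_riccatiXi ht.2 hu]
  refine ⟨?_, ?_, ?_⟩
  · have h := key (T - d) le_rfl 1
    simp only [one_mul, F, riccatiXi_self] at h
    linarith
  · simp only [show ∀ x, b * F x * (b ^ 2 * F x) = b * (b * F x) ^ 2 from fun x => by ring,
      key _ (min_le_left _ _)]
    ring
  · simp only [show ∀ x, b ^ 2 * F x * (b ^ 2 * F x) = b ^ 2 * (b * F x) ^ 2 from fun x => by ring,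
      key _ (min_le_left _ _)]
    ring

lemma isContTriple_riccatiXi :
    isContTriple T d (riccatiXi b σ (T - d)) (fun t _ => b * riccatiXi b σ (T - d) t)
      (fun t _ _ => b ^ 2 * riccatiXi b σ (T - d) t) := by
  have hF : ContinuousOn (riccatiXi b σ (T - d)) (Icc (T - 2 * d) (T - d)) :=
    continuousOn_riccatiXi.mono fun _ hx => hx.2
  exact ⟨hF, continuousOn_const.mul (hF.comp continuousOn_fst fun _ hp => hp.1),
    continuousOn_const.mul (hF.comp continuousOn_fst fun _ hp => hp.1)⟩

lemma riccatiXi_mem_Icc {t : ℝ} (ht : t ∈ Icc (T - 2 * d) (T - d)) :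
    riccatiXi b σ (T - d) t ∈ Icc (1 - d * (b / σ) ^ 2) 1 := by
  refine ⟨le_trans ?_ (one_sub_le_riccatiXi ht.2), riccatiXi_le_one ht.2⟩
  have : T - d - t ≤ d := by linarith [ht.1]
  gcongr

end explicitSolution

structure IsBoundedSolution (b σ T d A : ℝ) (ξ₁ : ℝ → ℝ) (ξ₂ : ℝ → ℝ → ℝ)
    (ξ₃ : ℝ → ℝ → ℝ → ℝ) : Prop where
  cont : isContTriple T d ξ₁ ξ₂ ξ₃
  sol : isSolutionSlice b σ T d ξ₁ ξ₂ ξ₃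
  bound : ∀ t ∈ Icc (T - 2 * d) (T - d), |ξ₁ t| ≤ A ∧ ∀ s ∈ Icc (-d) 0, |ξ₂ t s| ≤ A ∧
    ∀ r ∈ Icc (-d) 0, |ξ₃ t s r| ≤ A

def DefectLE (b T d : ℝ) (g₁ h₁ : ℝ → ℝ) (g₂ h₂ : ℝ → ℝ → ℝ) (g₃ h₃ : ℝ → ℝ → ℝ → ℝ)
    (ρ : ℝ → ℝ) : Prop :=
  ∀ t ∈ Icc (T - 2 * d) (T - d), |g₁ t - h₁ t| ≤ ρ t ∧
    ∀ s ∈ Icc (-d) 0, |g₂ t s - h₂ t s| ≤ (|b| + 1) * ρ t ∧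
      ∀ r ∈ Icc (-d) 0, |g₃ t s r - h₃ t s r| ≤ (|b| + 1) ^ 2 * ρ t

section uniqueness

variable {b σ d T A A' B : ℝ} {ξ₁ g₁ h₁ : ℝ → ℝ} {ξ₂ g₂ h₂ : ℝ → ℝ → ℝ}
  {ξ₃ g₃ h₃ : ℝ → ℝ → ℝ → ℝ}

lemma isContTriple.exists_isBoundedSolution (hc : isContTriple T d ξ₁ ξ₂ ξ₃)
    (hs : isSolutionSlice b σ T d ξ₁ ξ₂ ξ₃) : ∃ A, IsBoundedSolution b σ T d A ξ₁ ξ₂ ξ₃ := by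
  obtain ⟨A₁, hA₁⟩ := isCompact_Icc.exists_bound_of_continuousOn hc.1
  obtain ⟨A₂, hA₂⟩ := (isCompact_Icc.prod isCompact_Icc).exists_bound_of_continuousOn hc.2.1
  obtain ⟨A₃, hA₃⟩ :=
    (isCompact_Icc.prod (isCompact_Icc.prod isCompact_Icc)).exists_bound_of_continuousOn hc.2.2
  refine ⟨max A₁ (max A₂ A₃), hc, hs, fun t ht => ⟨?_, fun s hs => ⟨?_, fun r hr => ?_⟩⟩⟩
  · exact (hA₁ t ht).trans (le_max_left _ _)
  · exact (hA₂ (t, s) ⟨ht, hs⟩).trans ((le_max_left _ _).trans (le_max_right _ _))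
  · exact (hA₃ (t, s, r) ⟨ht, hs, hr⟩).trans ((le_max_right _ _).trans (le_max_right _ _))

lemma IsBoundedSolution.mono (h : IsBoundedSolution b σ T d A ξ₁ ξ₂ ξ₃) (hAA' : A ≤ A') :
    IsBoundedSolution b σ T d A' ξ₁ ξ₂ ξ₃ :=
  ⟨h.cont, h.sol, fun t ht => ⟨(h.bound t ht).1.trans hAA', fun s hs =>
    ⟨((h.bound t ht).2 s hs).1.trans hAA', fun r hr =>
      (((h.bound t ht).2 s hs).2 r hr).trans hAA'⟩⟩⟩

lemma isContTriple.continuousOn_comp₂ (hc : isContTriple T d ξ₁ ξ₂ ξ₃) {S : Set ℝ} {u : ℝ → ℝ}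
    (hu : ContinuousOn u S) (hS : ∀ x ∈ S, x ∈ Icc (T - 2 * d) (T - d) ∧ u x ∈ Icc (-d) 0) :
    ContinuousOn (fun x => ξ₂ x (u x)) S :=
  hc.2.1.comp (continuousOn_id.prodMk hu) fun x hx => hS x hx

lemma isContTriple.continuousOn_comp₃ (hc : isContTriple T d ξ₁ ξ₂ ξ₃) {S : Set ℝ}
    {u v : ℝ → ℝ} (hu : ContinuousOn u S) (hv : ContinuousOn v S)
    (hS : ∀ x ∈ S, x ∈ Icc (T - 2 * d) (T - d) ∧ u x ∈ Icc (-d) 0 ∧ v x ∈ Icc (-d) 0) :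
    ContinuousOn (fun x => ξ₃ x (u x) (v x)) S :=
  hc.2.2.comp (continuousOn_id.prodMk (hu.prodMk hv)) fun x hx => hS x hx

lemma DefectLE.abs_sub₂_le {ρ : ℝ → ℝ} (hD : DefectLE b T d g₁ h₁ g₂ h₂ g₃ h₃ ρ) {t s : ℝ}
    (ht : t ∈ Icc (T - 2 * d) (T - d)) (hs : s ∈ Icc (-d) 0) (hρ : 0 ≤ ρ t) :
    |g₂ t s - h₂ t s| ≤ (|b| + 1) ^ 2 * ρ t := by
  have := ((hD t ht).2 s hs).1
  nlinarith [mul_nonneg (mul_nonneg (abs_nonneg b) (by positivity : (0 : ℝ) ≤ |b| + 1)) hρ]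

lemma DefectLE.abs_sub₁_le_succ (hg : IsBoundedSolution b σ T d A g₁ g₂ g₃)
    (hh : IsBoundedSolution b σ T d A h₁ h₂ h₃) (hB : 0 ≤ B) {n : ℕ}
    (hD : DefectLE b T d g₁ h₁ g₂ h₂ g₃ h₃
      (picardBound B ((σ ^ 2)⁻¹ * (2 * A * (|b| + 1) ^ 2)) (T - d) n))
    {t : ℝ} (ht : t ∈ Icc (T - 2 * d) (T - d)) :
    |g₁ t - h₁ t| ≤ picardBound B ((σ ^ 2)⁻¹ * (2 * A * (|b| + 1) ^ 2)) (T - d) (n + 1) t := by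
  have hA : 0 ≤ A := (abs_nonneg _).trans (hg.bound t ht).1
  have h0 : (0 : ℝ) ∈ Icc (-d) 0 := ⟨by linarith [ht.1, ht.2], le_rfl⟩
  have hI : ∀ x ∈ Icc t (T - d), x ∈ Icc (T - 2 * d) (T - d) :=
    fun x hx => ⟨ht.1.trans hx.1, hx.2⟩
  rw [(hg.sol t ht 0 h0 0 h0).1, (hh.sol t ht 0 h0 0 h0).1, sub_sub_sub_cancel_left]
  refine abs_mul_integral_sub_le_picardBound_succ n (by positivity) (by positivity) hB ht.2 le_rfl
    ((hh.cont.continuousOn_comp₂ continuousOn_const fun x hx => ⟨hI x hx, h0⟩).pow 2)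
    ((hg.cont.continuousOn_comp₂ continuousOn_const fun x hx => ⟨hI x hx, h0⟩).pow 2)
    fun x hx => ?_
  have hρ := picardBound_nonneg hB (by positivity) hx.2 n (K := (σ ^ 2)⁻¹ * (2 * A * (|b| + 1) ^ 2))
  have hδ := hD.abs_sub₂_le (hI x hx) h0 hρ
  rw [abs_sub_comm] at hδ
  rw [sq, sq]
  exact (abs_mul_sub_mul_le ((hh.bound x (hI x hx)).2 0 h0).1 ((hg.bound x (hI x hx)).2 0 h0).1
    hδ hδ).trans_eq (by ring)

lemma DefectLE.abs_sub₂_le_succ (hg : IsBoundedSolution b σ T d A g₁ g₂ g₃)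
    (hh : IsBoundedSolution b σ T d A h₁ h₂ h₃) (hB : 0 ≤ B) {n : ℕ}
    (hD : DefectLE b T d g₁ h₁ g₂ h₂ g₃ h₃
      (picardBound B ((σ ^ 2)⁻¹ * (2 * A * (|b| + 1) ^ 2)) (T - d) n))
    (hD₁ : ∀ t ∈ Icc (T - 2 * d) (T - d),
      |g₁ t - h₁ t| ≤ picardBound B ((σ ^ 2)⁻¹ * (2 * A * (|b| + 1) ^ 2)) (T - d) (n + 1) t)
    {t s : ℝ} (ht : t ∈ Icc (T - 2 * d) (T - d)) (hs : s ∈ Icc (-d) 0) :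
    |g₂ t s - h₂ t s|
      ≤ (|b| + 1) * picardBound B ((σ ^ 2)⁻¹ * (2 * A * (|b| + 1) ^ 2)) (T - d) (n + 1) t := by
  rw [(hg.sol t ht s hs s hs).2.1, (hh.sol t ht s hs s hs).2.1]
  set K := (σ ^ 2)⁻¹ * (2 * A * (|b| + 1) ^ 2)
  set m := min (T - d) (t + s + d)
  have hA : 0 ≤ A := (abs_nonneg _).trans (hg.bound t ht).1
  have h0 : (0 : ℝ) ∈ Icc (-d) 0 := ⟨by linarith [ht.1, ht.2], le_rfl⟩
  have htm : t ≤ m := le_min ht.2 (by linarith [hs.1])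
  have hmc : m ≤ T - d := min_le_left _ _
  have hI : ∀ x ∈ Icc t m, x ∈ Icc (T - 2 * d) (T - d) :=
    fun x hx => ⟨ht.1.trans hx.1, hx.2.trans hmc⟩
  have hJ : ∀ x ∈ Icc t m, t + s - x ∈ Icc (-d) 0 := fun x hx =>
    ⟨by linarith [hx.2, min_le_right (T - d) (t + s + d)], by linarith [hx.1, hs.2]⟩
  have hint : |(σ ^ 2)⁻¹ * (∫ x in t..m, g₂ x 0 * g₃ x (t + s - x) 0)
      - (σ ^ 2)⁻¹ * ∫ x in t..m, h₂ x 0 * h₃ x (t + s - x) 0|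
        ≤ picardBound B K (T - d) (n + 1) t := by
    have hcont : ∀ {ξ₁ : ℝ → ℝ} {ξ₂ : ℝ → ℝ → ℝ} {ξ₃ : ℝ → ℝ → ℝ → ℝ},
        isContTriple T d ξ₁ ξ₂ ξ₃ →
          ContinuousOn (fun x => ξ₂ x 0 * ξ₃ x (t + s - x) 0) (Icc t m) :=
      fun hc => (hc.continuousOn_comp₂ continuousOn_const fun x hx => ⟨hI x hx, h0⟩).mul
        (hc.continuousOn_comp₃ (by fun_prop) continuousOn_const fun x hx => ⟨hI x hx, hJ x hx, h0⟩)
    refine abs_mul_integral_sub_le_picardBound_succ n (by positivity) (by positivity) hB htm hmc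
      (hcont hg.cont) (hcont hh.cont) fun x hx => ?_
    have hρ := picardBound_nonneg hB (by positivity) (hx.2.trans hmc) n (K := K)
    have hxI := hI x hx
    exact (abs_mul_sub_mul_le ((hg.bound x hxI).2 0 h0).1
      (((hh.bound x hxI).2 _ (hJ x hx)).2 0 h0) (hD.abs_sub₂_le hxI h0 hρ)
      (((hD x hxI).2 _ (hJ x hx)).2 0 h0)).trans_eq (by ring)
  have hm : |g₁ m - h₁ m| ≤ picardBound B K (T - d) (n + 1) t :=
    (hD₁ m ⟨ht.1.trans htm, hmc⟩).trans
      (picardBound_antitoneOn hB (by positivity) htm hmc (n + 1))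
  calc _ = |b * (g₁ m - h₁ m) - ((σ ^ 2)⁻¹ * (∫ x in t..m, g₂ x 0 * g₃ x (t + s - x) 0)
        - (σ ^ 2)⁻¹ * ∫ x in t..m, h₂ x 0 * h₃ x (t + s - x) 0)| := by ring_nf
    _ ≤ |b| * picardBound B K (T - d) (n + 1) t + picardBound B K (T - d) (n + 1) t :=
        abs_mul_sub_le hm hint
    _ ≤ (|b| + 1) * picardBound B K (T - d) (n + 1) t := by nlinarith [abs_nonneg b]

lemma DefectLE.abs_sub₃_le_succ (hg : IsBoundedSolution b σ T d A g₁ g₂ g₃)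
    (hh : IsBoundedSolution b σ T d A h₁ h₂ h₃) (hB : 0 ≤ B) {n : ℕ}
    (hD : DefectLE b T d g₁ h₁ g₂ h₂ g₃ h₃
      (picardBound B ((σ ^ 2)⁻¹ * (2 * A * (|b| + 1) ^ 2)) (T - d) n))
    (hD₂ : ∀ t ∈ Icc (T - 2 * d) (T - d), ∀ s ∈ Icc (-d) 0, |g₂ t s - h₂ t s|
      ≤ (|b| + 1) * picardBound B ((σ ^ 2)⁻¹ * (2 * A * (|b| + 1) ^ 2)) (T - d) (n + 1) t)
    {t s r : ℝ} (ht : t ∈ Icc (T - 2 * d) (T - d)) (hs : s ∈ Icc (-d) 0) (hr : r ∈ Icc (-d) 0) :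
    |g₃ t s r - h₃ t s r|
      ≤ (|b| + 1) ^ 2 * picardBound B ((σ ^ 2)⁻¹ * (2 * A * (|b| + 1) ^ 2)) (T - d) (n + 1) t := by
  rw [(hg.sol t ht s hs r hr).2.2, (hh.sol t ht s hs r hr).2.2]
  set K := (σ ^ 2)⁻¹ * (2 * A * (|b| + 1) ^ 2)
  set m := min (T - d) (t + min s r + d)
  have hA : 0 ≤ A := (abs_nonneg _).trans (hg.bound t ht).1
  have h0 : (0 : ℝ) ∈ Icc (-d) 0 := ⟨by linarith [ht.1, ht.2], le_rfl⟩
  have htm : t ≤ m := le_min ht.2 (by linarith [le_min hs.1 hr.1])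
  have hmc : m ≤ T - d := min_le_left _ _
  have hI : ∀ x ∈ Icc t m, x ∈ Icc (T - 2 * d) (T - d) :=
    fun x hx => ⟨ht.1.trans hx.1, hx.2.trans hmc⟩
  have hm_le : m ≤ t + min s r + d := min_le_right _ _
  have hJs : ∀ x ∈ Icc t m, t + s - x ∈ Icc (-d) 0 := fun x hx =>
    ⟨by linarith [hx.2, min_le_left s r], by linarith [hx.1, hs.2]⟩
  have hJr : ∀ x ∈ Icc t m, t + r - x ∈ Icc (-d) 0 := fun x hx =>
    ⟨by linarith [hx.2, min_le_right s r], by linarith [hx.1, hr.2]⟩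
  have hsr : |s - r| - d ∈ Icc (-d) 0 := by
    have : |s - r| ≤ d := abs_le.2 ⟨by linarith [hs.1, hr.2], by linarith [hs.2, hr.1]⟩
    exact ⟨by linarith [abs_nonneg (s - r)], by linarith⟩
  have hint : |(σ ^ 2)⁻¹ * (∫ x in t..m, g₃ x (t + s - x) 0 * g₃ x 0 (t + r - x))
      - (σ ^ 2)⁻¹ * ∫ x in t..m, h₃ x (t + s - x) 0 * h₃ x 0 (t + r - x)|
        ≤ picardBound B K (T - d) (n + 1) t := by
    have hcont : ∀ {ξ₁ : ℝ → ℝ} {ξ₂ : ℝ → ℝ → ℝ} {ξ₃ : ℝ → ℝ → ℝ → ℝ},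
        isContTriple T d ξ₁ ξ₂ ξ₃ →
          ContinuousOn (fun x => ξ₃ x (t + s - x) 0 * ξ₃ x 0 (t + r - x)) (Icc t m) :=
      fun hc => (hc.continuousOn_comp₃ (by fun_prop) continuousOn_const
          fun x hx => ⟨hI x hx, hJs x hx, h0⟩).mul
        (hc.continuousOn_comp₃ continuousOn_const (by fun_prop)
          fun x hx => ⟨hI x hx, h0, hJr x hx⟩)
    refine abs_mul_integral_sub_le_picardBound_succ n (by positivity) (by positivity) hB htm hmc
      (hcont hg.cont) (hcont hh.cont) fun x hx => ?_
    have hxI := hI x hx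
    exact (abs_mul_sub_mul_le (((hg.bound x hxI).2 _ (hJs x hx)).2 0 h0)
      (((hh.bound x hxI).2 0 h0).2 _ (hJr x hx)) (((hD x hxI).2 _ (hJs x hx)).2 0 h0)
      (((hD x hxI).2 0 h0).2 _ (hJr x hx))).trans_eq (by ring)
  have hm : |g₂ m (|s - r| - d) - h₂ m (|s - r| - d)|
      ≤ (|b| + 1) * picardBound B K (T - d) (n + 1) t :=
    (hD₂ m ⟨ht.1.trans htm, hmc⟩ _ hsr).trans (mul_le_mul_of_nonneg_left
      (picardBound_antitoneOn hB (by positivity) htm hmc (n + 1)) (by positivity))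
  have hρ := picardBound_nonneg hB (by positivity) ht.2 (n + 1) (K := K)
  calc _ = |b * (g₂ m (|s - r| - d) - h₂ m (|s - r| - d))
        - ((σ ^ 2)⁻¹ * (∫ x in t..m, g₃ x (t + s - x) 0 * g₃ x 0 (t + r - x))
          - (σ ^ 2)⁻¹ * ∫ x in t..m, h₃ x (t + s - x) 0 * h₃ x 0 (t + r - x))| := by ring_nf
    _ ≤ |b| * ((|b| + 1) * picardBound B K (T - d) (n + 1) t)
          + picardBound B K (T - d) (n + 1) t := abs_mul_sub_le hm hint
    _ ≤ (|b| + 1) ^ 2 * picardBound B K (T - d) (n + 1) t := by nlinarith [abs_nonneg b]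

lemma DefectLE.succ (hg : IsBoundedSolution b σ T d A g₁ g₂ g₃)
    (hh : IsBoundedSolution b σ T d A h₁ h₂ h₃) (hB : 0 ≤ B) {n : ℕ}
    (hD : DefectLE b T d g₁ h₁ g₂ h₂ g₃ h₃
      (picardBound B ((σ ^ 2)⁻¹ * (2 * A * (|b| + 1) ^ 2)) (T - d) n)) :
    DefectLE b T d g₁ h₁ g₂ h₂ g₃ h₃
      (picardBound B ((σ ^ 2)⁻¹ * (2 * A * (|b| + 1) ^ 2)) (T - d) (n + 1)) := by
  have hD₁ := fun t (ht : t ∈ Icc (T - 2 * d) (T - d)) => hD.abs_sub₁_le_succ hg hh hB ht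
  have hD₂ := fun t (ht : t ∈ Icc (T - 2 * d) (T - d)) s (hs : s ∈ Icc (-d) 0) =>
    hD.abs_sub₂_le_succ hg hh hB hD₁ ht hs
  exact fun t ht => ⟨hD₁ t ht, fun s hs =>
    ⟨hD₂ t ht s hs, fun r hr => hD.abs_sub₃_le_succ hg hh hB hD₂ ht hs hr⟩⟩

lemma defectLE_two_mul (hg : IsBoundedSolution b σ T d A g₁ g₂ g₃)
    (hh : IsBoundedSolution b σ T d A h₁ h₂ h₃) :
    DefectLE b T d g₁ h₁ g₂ h₂ g₃ h₃ fun _ => 2 * A := by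
  intro t ht
  have hA : 0 ≤ 2 * A := by linarith [(abs_nonneg _).trans (hg.bound t ht).1]
  have hb1 : 1 ≤ |b| + 1 := le_add_of_nonneg_left (abs_nonneg b)
  have hsub : ∀ {x y : ℝ}, |x| ≤ A → |y| ≤ A → |x - y| ≤ 2 * A := fun hx hy =>
    (abs_sub _ _).trans (by linarith)
  refine ⟨hsub (hg.bound t ht).1 (hh.bound t ht).1, fun s hs => ⟨?_, fun r hr => ?_⟩⟩
  · exact (hsub ((hg.bound t ht).2 s hs).1 ((hh.bound t ht).2 s hs).1).trans
      (le_mul_of_one_le_left hA hb1)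
  · exact (hsub (((hg.bound t ht).2 s hs).2 r hr) (((hh.bound t ht).2 s hs).2 r hr)).trans
      (le_mul_of_one_le_left hA (one_le_pow₀ hb1))

theorem eq_of_isSolutionSlice (hg : isContTriple T d g₁ g₂ g₃)
    (sg : isSolutionSlice b σ T d g₁ g₂ g₃) (hh : isContTriple T d h₁ h₂ h₃)
    (sh : isSolutionSlice b σ T d h₁ h₂ h₃) :
    (∀ t ∈ Icc (T - 2 * d) (T - d), g₁ t = h₁ t) ∧
      (∀ t ∈ Icc (T - 2 * d) (T - d), ∀ s ∈ Icc (-d) 0, g₂ t s = h₂ t s) ∧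
      ∀ t ∈ Icc (T - 2 * d) (T - d), ∀ s ∈ Icc (-d) 0, ∀ r ∈ Icc (-d) 0,
        g₃ t s r = h₃ t s r := by
  obtain ⟨A₁, hgA⟩ := hg.exists_isBoundedSolution sg
  obtain ⟨A₂, hhA⟩ := hh.exists_isBoundedSolution sh
  obtain ⟨A, hA, hg', hh'⟩ : ∃ A, 0 ≤ A ∧ IsBoundedSolution b σ T d A g₁ g₂ g₃ ∧
      IsBoundedSolution b σ T d A h₁ h₂ h₃ :=
    ⟨max (max A₁ A₂) 0, le_max_right _ _, hgA.mono ((le_max_left _ _).trans (le_max_left _ _)),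
      hhA.mono ((le_max_right _ _).trans (le_max_left _ _))⟩
  have hD : ∀ n, DefectLE b T d g₁ h₁ g₂ h₂ g₃ h₃
      (picardBound (2 * A) ((σ ^ 2)⁻¹ * (2 * A * (|b| + 1) ^ 2)) (T - d) n) := by
    intro n
    induction n with
    | zero =>
      convert defectLE_two_mul hg' hh' using 1
      funext t
      simp [picardBound]
    | succ n ih => exact ih.succ hg' hh' (by positivity)
  refine ⟨fun t ht => sub_eq_zero.1 (eq_zero_of_forall_abs_le_mul_picardBound fun n =>
      ((hD n t ht).1).trans_eq (one_mul _).symm),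
    fun t ht s hs => sub_eq_zero.1 (eq_zero_of_forall_abs_le_mul_picardBound fun n =>
      ((hD n t ht).2 s hs).1),
    fun t ht s hs r hr => sub_eq_zero.1 (eq_zero_of_forall_abs_le_mul_picardBound fun n =>
      ((hD n t ht).2 s hs).2 r hr)⟩

end uniqueness

theorem stmt_6_general (b σ d T : ℝ) :
    ∃ (ξ₁ : ℝ → ℝ) (ξ₂ : ℝ → ℝ → ℝ) (ξ₃ : ℝ → ℝ → ℝ → ℝ),
      isContTriple T d ξ₁ ξ₂ ξ₃ ∧ isSolutionSlice b σ T d ξ₁ ξ₂ ξ₃ ∧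
      (∀ t ∈ Icc (T - 2 * d) (T - d), 1 - d * (b / σ) ^ 2 ≤ ξ₁ t ∧ ξ₁ t ≤ 1) ∧
      ∀ (ξ₁' : ℝ → ℝ) (ξ₂' : ℝ → ℝ → ℝ) (ξ₃' : ℝ → ℝ → ℝ → ℝ),
        isContTriple T d ξ₁' ξ₂' ξ₃' → isSolutionSlice b σ T d ξ₁' ξ₂' ξ₃' →
          (∀ t ∈ Icc (T - 2 * d) (T - d), ξ₁' t = ξ₁ t) ∧
          (∀ t ∈ Icc (T - 2 * d) (T - d), ∀ s ∈ Icc (-d) 0, ξ₂' t s = ξ₂ t s) ∧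
          (∀ t ∈ Icc (T - 2 * d) (T - d), ∀ s ∈ Icc (-d) 0, ∀ r ∈ Icc (-d) 0,
            ξ₃' t s r = ξ₃ t s r) :=
  ⟨_, _, _, isContTriple_riccatiXi, isSolutionSlice_riccatiXi, fun _ ht => riccatiXi_mem_Icc ht,
    fun _ _ _ hc hs => eq_of_isSolutionSlice hc hs isContTriple_riccatiXi isSolutionSlice_riccatiXi⟩

/-- If `1 - d (b/σ)² > 0`, the first-slice integral system on the full
slice `[T-2d, T-d] × [-d,0]²` admits a unique continuous solution, and its first
component satisfies `0 < 1 - d (b/σ)² ≤ ξ₁ ≤ 1`. -/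
theorem stmt_6 (b σ d T : ℝ) (hσ : σ ≠ 0) (hd : 0 < d) (hT : 2 * d ≤ T)
    (hpos : 0 < 1 - d * (b / σ) ^ 2) :
    ∃ (ξ₁ : ℝ → ℝ) (ξ₂ : ℝ → ℝ → ℝ) (ξ₃ : ℝ → ℝ → ℝ → ℝ),
      isContTriple T d ξ₁ ξ₂ ξ₃ ∧ isSolutionSlice b σ T d ξ₁ ξ₂ ξ₃ ∧
      (∀ t ∈ Icc (T - 2 * d) (T - d), 1 - d * (b / σ) ^ 2 ≤ ξ₁ t ∧ ξ₁ t ≤ 1) ∧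
      ∀ (ξ₁' : ℝ → ℝ) (ξ₂' : ℝ → ℝ → ℝ) (ξ₃' : ℝ → ℝ → ℝ → ℝ),
        isContTriple T d ξ₁' ξ₂' ξ₃' → isSolutionSlice b σ T d ξ₁' ξ₂' ξ₃' →
          (∀ t ∈ Icc (T - 2 * d) (T - d), ξ₁' t = ξ₁ t) ∧
          (∀ t ∈ Icc (T - 2 * d) (T - d), ∀ s ∈ Icc (-d) 0, ξ₂' t s = ξ₂ t s) ∧
          (∀ t ∈ Icc (T - 2 * d) (T - d), ∀ s ∈ Icc (-d) 0, ∀ r ∈ Icc (-d) 0,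
            ξ₃' t s r = ξ₃ t s r) :=
  stmt_6_general b σ d T
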